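/- arXiv:2007.15988 — 2 statements merged into one kernel-verified Lean document; each statement's English description precedes it below -/
import Mathlib

section
/- Let E be a real symmetric positive definite N×N matrix and A a real N×N matrix with −(A + A^T) positive semidefinite. If x : ℝ → ℝ^N is differentiable and satisfies the descriptor system E x′(t) = A x(t) for all t, then the energy t ↦ x(t)^T E x(t) is non-increasing in t. That is, the unperturbed linear network model is energy-dissipating. -/
open Matrix

/-! Along a solution, `E` symmetric turns `d/dt (xᵀ E x) = ẋᵀ E x + xᵀ E ẋ` into `2 xᵀ E ẋ = 2 xᵀ A x
= xᵀ (A + Aᵀ) x`, which is `≤ 0` by the dissipativity of `A`. -/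

section Calculus

variable {ι 𝕜 : Type*} [Fintype ι] [NontriviallyNormedField 𝕜]
  {u v : 𝕜 → ι → 𝕜} {u' v' : ι → 𝕜} {t : 𝕜}

theorem HasDerivAt.dotProduct (hu : HasDerivAt u u' t) (hv : HasDerivAt v v' t) :
    HasDerivAt (fun s => u s ⬝ᵥ v s) (u' ⬝ᵥ v t + u t ⬝ᵥ v') t := by
  have h := HasDerivAt.fun_sum (u := Finset.univ) fun i _ =>
    (hasDerivAt_pi.1 hu i).fun_mul (hasDerivAt_pi.1 hv i)
  simpa only [_root_.dotProduct, Finset.sum_add_distrib] using h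

theorem HasDerivAt.mulVec {κ : Type*} (M : Matrix κ ι 𝕜) (hu : HasDerivAt u u' t) :
    HasDerivAt (fun s => M *ᵥ u s) (M *ᵥ u') t :=
  hasDerivAt_pi.2 fun i =>
    HasDerivAt.fun_sum (u := Finset.univ) fun j _ => (hasDerivAt_pi.1 hu j).const_mul (M i j)

end Calculus

theorem Matrix.IsSymm.dotProduct_mulVec_comm {ι R : Type*} [Fintype ι] [CommSemiring R]
    {M : Matrix ι ι R} (hM : M.IsSymm) (x y : ι → R) : x ⬝ᵥ M *ᵥ y = y ⬝ᵥ M *ᵥ x := by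
  rw [← dotProduct_transpose_mulVec, hM.eq]

theorem hasDerivAt_energy_of_descriptor {ι : Type*} [Fintype ι] {E A : Matrix ι ι ℝ}
    (hE : E.IsSymm) {x : ℝ → ι → ℝ} {x' : ι → ℝ} {t : ℝ} (hx : HasDerivAt x x' t)
    (hode : E *ᵥ x' = A *ᵥ x t) :
    HasDerivAt (fun s => x s ⬝ᵥ E *ᵥ x s) (x t ⬝ᵥ (A + Aᵀ) *ᵥ x t) t := by
  refine (hx.dotProduct (hx.mulVec E)).congr_deriv ?_
  rw [hE.dotProduct_mulVec_comm x', hode, add_mulVec, dotProduct_add,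
    dotProduct_transpose_mulVec]

/-- The unperturbed linear descriptor system E ẋ = A x with E symmetric
positive definite and −(A + Aᵀ) positive semidefinite is energy-dissipating:
the energy t ↦ x(t)ᵀ E x(t) is non-increasing. -/
theorem descriptor_system_energy_dissipating {N : ℕ}
    (E A : Matrix (Fin N) (Fin N) ℝ)
    (hE : E.PosDef) (hA : (-(A + Aᵀ)).PosSemidef)
    (x : ℝ → (Fin N → ℝ)) (hx : Differentiable ℝ x)
    (hode : ∀ t : ℝ, E.mulVec (deriv x t) = A.mulVec (x t)) :
    Antitone (fun t : ℝ => x t ⬝ᵥ E.mulVec (x t)) := by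
  have hEsymm : E.IsSymm := isHermitian_iff_isSymm.1 hE.isHermitian
  have henergy t := hasDerivAt_energy_of_descriptor hEsymm (hx t).hasDerivAt (hode t)
  refine antitone_of_deriv_nonpos (fun t => (henergy t).differentiableAt) fun t => ?_
  have hdiss := hA.dotProduct_mulVec_nonneg (x t)
  rw [star_trivial, neg_mulVec, dotProduct_neg] at hdiss
  rw [(henergy t).deriv]
  linarith
end

section
/- Let E be a real symmetric positive definite N×N matrix, A a real N×N matrix with −(A + A^T) positive semidefinite, τ > 0, and θ ∈ [1/2, 1]. If x_k, x_{k+1} ∈ ℝ^N satisfy the θ-scheme step (E − τθA) x_{k+1} = (E + τ(1−θ)A) x_k, then x_{k+1}^T E x_{k+1} ≤ x_k^T E x_k. That is, for θ ≥ 1/2 the θ-scheme time discretization preserves the energy dissipation of the dissipative descriptor system. -/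
/-!
With `d = x_{k+1} - x_k` and `y = θ x_{k+1} + (1 - θ) x_k` the θ-step reads `E d = τ A y`, and for
symmetric `E`
  `x_{k+1}ᵀ E x_{k+1} - x_kᵀ E x_k = 2 yᵀ E d - (2θ - 1) dᵀ E d = 2τ yᵀ A y - (2θ - 1) dᵀ E d`.
Both terms are `≤ 0` once `τ ≥ 0`, `θ ≥ 1/2`, `E` is positive semidefinite and `A + Aᵀ` is
negative semidefinite.
-/

open Matrix

namespace Matrix

variable {n R : Type*} [Fintype n]

section CommRing

variable [CommRing R]

theorem IsSymm.dotProduct_mulVec_sub_dotProduct_mulVec {E : Matrix n n R} (hE : E.IsSymm)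
    (θ : R) (x y : n → R) :
    x ⬝ᵥ E *ᵥ x - y ⬝ᵥ E *ᵥ y =
      2 * ((θ • x + (1 - θ) • y) ⬝ᵥ E *ᵥ (x - y)) - (2 * θ - 1) * ((x - y) ⬝ᵥ E *ᵥ (x - y)) := by
  have hsymm : y ⬝ᵥ E *ᵥ x = x ⬝ᵥ E *ᵥ y := by
    rw [← dotProduct_transpose_mulVec, hE.eq]
  simp only [mulVec_sub, dotProduct_sub, sub_dotProduct, add_dotProduct, smul_dotProduct,
    smul_eq_mul, hsymm]
  ring

theorem theta_step_iff (E A : Matrix n n R) (τ θ : R) (x x' : n → R) :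
    (E - (τ * θ) • A) *ᵥ x' = (E + (τ * (1 - θ)) • A) *ᵥ x ↔
      E *ᵥ (x' - x) = τ • A *ᵥ (θ • x' + (1 - θ) • x) := by
  rw [← sub_eq_zero, ← sub_eq_zero (a := E *ᵥ (x' - x))]
  congr! 1
  simp only [sub_mulVec, add_mulVec, smul_mulVec, mulVec_sub, mulVec_add, mulVec_smul, smul_add,
    smul_smul]
  module

end CommRing

theorem dotProduct_mulVec_nonpos_of_posSemidef_neg_add_transpose [Field R] [LinearOrder R]
    [IsStrictOrderedRing R] [StarRing R] [TrivialStar R] {A : Matrix n n R}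
    (hA : (-(A + Aᵀ)).PosSemidef) (x : n → R) : x ⬝ᵥ A *ᵥ x ≤ 0 := by
  have h := hA.dotProduct_mulVec_nonneg x
  rw [star_trivial, neg_mulVec, add_mulVec, dotProduct_neg, dotProduct_add,
    dotProduct_transpose_mulVec] at h
  linarith

end Matrix

/-- For θ ∈ [1/2, 1] the θ-scheme time discretization preserves the energy
dissipation of the dissipative descriptor system: if
(E − τθA) x_{k+1} = (E + τ(1−θ)A) x_k, then the discrete energy decreases. -/
theorem theta_scheme_energy_dissipating {N : ℕ}
    (E A : Matrix (Fin N) (Fin N) ℝ)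
    (hE : E.PosDef) (hA : (-(A + Aᵀ)).PosSemidef)
    (τ θ : ℝ) (hτ : 0 < τ) (hθ : θ ∈ Set.Icc (1/2 : ℝ) 1)
    (xk xk1 : Fin N → ℝ)
    (hstep : (E - (τ * θ) • A).mulVec xk1 = (E + (τ * (1 - θ)) • A).mulVec xk) :
    xk1 ⬝ᵥ E.mulVec xk1 ≤ xk ⬝ᵥ E.mulVec xk := by
  obtain ⟨hθ, -⟩ := hθ
  set y := θ • xk1 + (1 - θ) • xk
  set d := xk1 - xk
  have hsymm : E.IsSymm := isHermitian_iff_isSymm.mp hE.isHermitian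
  have hwork : y ⬝ᵥ E *ᵥ d = τ * (y ⬝ᵥ A *ᵥ y) := by
    rw [(theta_step_iff E A τ θ xk xk1).mp hstep, dotProduct_smul, smul_eq_mul]
  have hdissipative := dotProduct_mulVec_nonpos_of_posSemidef_neg_add_transpose hA y
  have hE_nonneg : 0 ≤ d ⬝ᵥ E *ᵥ d := by
    simpa only [star_trivial] using hE.posSemidef.dotProduct_mulVec_nonneg d
  rw [← sub_nonpos, hsymm.dotProduct_mulVec_sub_dotProduct_mulVec θ, hwork]
  linarith [mul_nonneg (by linarith : (0 : ℝ) ≤ 2 * θ - 1) hE_nonneg,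
    mul_nonpos_of_nonneg_of_nonpos hτ.le hdissipative]
end
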